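/- Let H be an n×n symmetric positive definite matrix and let X = (X_t)_{t∈ℤ} be a centred, square-integrable strictly stationary process satisfying X_t − e^{−H} X_{t−1} = Δ_t G with G ∈ 𝒢_H square integrable. Let γ(t) = E[X_t X_0ᵀ] and r(t) = E[(Δ_t G)(Δ_0 G)ᵀ]. Then for every t ∈ ℤ, γ(t) = e^{−tH} Σ_{k=−∞}^{t} Σ_{j=−∞}^{0} e^{kH} r(k−j) e^{jH}, where the double series converges (as the limit of the partial sums Σ_{k=−M}^{t} Σ_{j=−M}^{0} as M → ∞). -/

import Mathlib

/-!
The recursion gives `e^{kH} Δ_k G = e^{kH} X_k - e^{(k-1)H} X_{k-1}`, so the partial sum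
`Σ_{k=-M}^{t} e^{kH} Δ_k G` telescopes to `e^{tH} X_t - e^{-(M+1)H} X_{-M-1}`. Stationarity of `X`
gives `E[X_a X_bᵀ] = γ(a - b)` and, since `Δ_k G = X_k - e^{-H} X_{k-1}`, also
`E[Δ_k G (Δ_j G)ᵀ] = r(k - j)`. Hence the partial double sum is the cross moment of two telescoped
sums; expanded, it is `e^{tH} γ(t)` plus three terms each carrying a factor `e^{-(M+1)H}`, which
tends to `0` because `H > 0`, while `|γ(s)ᵢⱼ| ≤ (γ(0)ᵢᵢ + γ(0)ⱼⱼ) / 2` stays bounded.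
-/

set_option autoImplicit false

open MeasureTheory Filter Finset Matrix Topology

variable {Ω : Type*}

/-- Two `ℤ`-indexed `ℝⁿ`-valued processes have the same finite-dimensional
distributions. -/
def SameFDD {n : ℕ} [MeasurableSpace Ω] (μ : Measure Ω)
    (X Y : ℤ → Ω → (Fin n → ℝ)) : Prop :=
  ∀ (m : ℕ) (t : Fin m → ℤ),
    μ.map (fun ω (i : Fin m) => X (t i) ω) = μ.map (fun ω (i : Fin m) => Y (t i) ω)

/-- Strict stationarity of a `ℤ`-indexed process. -/
def IsStationaryProcess {n : ℕ} [MeasurableSpace Ω] (μ : Measure Ω)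
    (X : ℤ → Ω → (Fin n → ℝ)) : Prop :=
  ∀ s : ℤ, SameFDD μ (fun t => X (t + s)) X

/-- Stationarity of increments of a `ℤ`-indexed process. -/
def HasStationaryIncrements {n : ℕ} [MeasurableSpace Ω] (μ : Measure Ω)
    (G : ℤ → Ω → (Fin n → ℝ)) : Prop :=
  ∀ s : ℤ, SameFDD μ (fun t ω => G (t + s) ω - G s ω) (fun t ω => G t ω - G 0 ω)

/-- The matrix exponential `e^{tH}` for an integer `t`. -/
noncomputable def zexp {n : ℕ} (H : Matrix (Fin n) (Fin n) ℝ) (t : ℤ) :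
    Matrix (Fin n) (Fin n) ℝ :=
  NormedSpace.exp ((t : ℝ) • H)

/-- The partial sum `Σ_{k=l}^0 e^{kH} Δ_k G`. -/
noncomputable def partialSumG {n : ℕ} (H : Matrix (Fin n) (Fin n) ℝ)
    (G : ℤ → Ω → (Fin n → ℝ)) (l : ℤ) (ω : Ω) : Fin n → ℝ :=
  ∑ k ∈ Finset.Icc l 0, (zexp H k).mulVec (G k ω - G (k - 1) ω)

/-- `G ∈ 𝒢_H` : `G` is a stationary-increment process starting from `0` whose partial
sums `Σ_{k=l}^0 e^{kH} Δ_k G` converge in probability as `l → −∞`. -/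
def MemG {n : ℕ} [MeasurableSpace Ω] (μ : Measure Ω) (H : Matrix (Fin n) (Fin n) ℝ)
    (G : ℤ → Ω → (Fin n → ℝ)) : Prop :=
  (∀ ω, G 0 ω = 0) ∧ HasStationaryIncrements μ G ∧
    ∃ ξ : Ω → (Fin n → ℝ), TendstoInMeasure μ (fun l => partialSumG H G l) Filter.atBot ξ

theorem Finset.sum_Icc_sub_int {M : Type*} [AddCommGroup M] (f : ℤ → M) {l u : ℤ}
    (h : l - 1 ≤ u) : ∑ k ∈ Icc l u, (f k - f (k - 1)) = f u - f (l - 1) := by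
  induction u, h using Int.leInduction with
  | base => simp
  | succ u hu ih =>
    rw [← insert_Icc_right_eq_Icc_add_one (by omega), sum_insert (by simp), ih,
      add_sub_cancel_right]
    abel

section MatrixLimits

variable {ι α : Type*} [NormedRing α] {m p q : Type*} [Fintype p] {l : Filter ι}

theorem Filter.Tendsto.matrix_zero_mul_isBoundedUnder_le {A : ι → Matrix m p α}
    {B : ι → Matrix p q α} (hA : Tendsto A l (𝓝 0))
    (hB : ∀ i j, IsBoundedUnder (· ≤ ·) l fun x => ‖B x i j‖) :
    Tendsto (fun x => A x * B x) l (𝓝 0) := by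
  refine tendsto_pi_nhds.mpr fun i => tendsto_pi_nhds.mpr fun j => ?_
  simpa only [mul_apply, Matrix.zero_apply, sum_const_zero] using tendsto_finsetSum univ fun a _ =>
    (tendsto_pi_nhds.mp (tendsto_pi_nhds.mp hA i) a).zero_mul_isBoundedUnder_le (hB a j)

theorem Filter.isBoundedUnder_le_matrix_mul_tendsto_zero {A : ι → Matrix m p α}
    {B : ι → Matrix p q α} (hA : ∀ i j, IsBoundedUnder (· ≤ ·) l fun x => ‖A x i j‖)
    (hB : Tendsto B l (𝓝 0)) :
    Tendsto (fun x => A x * B x) l (𝓝 0) := by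
  refine tendsto_pi_nhds.mpr fun i => tendsto_pi_nhds.mpr fun j => ?_
  simpa only [mul_apply, Matrix.zero_apply, sum_const_zero] using tendsto_finsetSum univ fun a _ =>
    isBoundedUnder_le_mul_tendsto_zero (hA i a) (tendsto_pi_nhds.mp (tendsto_pi_nhds.mp hB a) j)

end MatrixLimits

section MatrixExp

variable {m : Type*} [Fintype m] [DecidableEq m] {H : Matrix m m ℝ}

theorem Matrix.IsHermitian.exp_smul_eq (hH : H.IsHermitian) (c : ℝ) :
    NormedSpace.exp (c • H) = (hH.eigenvectorUnitary : Matrix m m ℝ) *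
      diagonal (fun i => Real.exp (c * hH.eigenvalues i)) *
        star (hH.eigenvectorUnitary : Matrix m m ℝ) := by
  have hcH : c • H = (hH.eigenvectorUnitary : Matrix m m ℝ) *
      diagonal (c • hH.eigenvalues) * star (hH.eigenvectorUnitary : Matrix m m ℝ) := by
    conv_lhs => rw [hH.spectral_theorem, Unitary.conjStarAlgAut_apply]
    rw [← smul_mul_assoc, ← mul_smul_comm, diagonal_smul]
    rfl
  rw [hcH]
  refine (Matrix.exp_units_conj (Unitary.toUnits hH.eigenvectorUnitary) _).trans ?_
  rw [exp_diagonal, Pi.exp_def]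
  simp [Real.exp_eq_exp_ℝ]

theorem Matrix.PosDef.tendsto_exp_smul_atBot (hH : H.PosDef) :
    Tendsto (fun c : ℝ => NormedSpace.exp (c • H)) atBot (𝓝 0) := by
  have hdiag : Tendsto (fun c : ℝ => diagonal fun i => Real.exp (c * hH.1.eigenvalues i))
      atBot (𝓝 0) := by
    rw [← diagonal_zero]
    refine (continuous_id.matrix_diagonal.tendsto _).comp (tendsto_pi_nhds.mpr fun i => ?_)
    exact Real.tendsto_exp_atBot.comp (tendsto_id.atBot_mul_const (hH.eigenvalues_pos i))
  have hconj : Continuous fun D : Matrix m m ℝ => (hH.1.eigenvectorUnitary : Matrix m m ℝ) * D *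
      star (hH.1.eigenvectorUnitary : Matrix m m ℝ) := by
    fun_prop
  refine Tendsto.congr (fun c => (hH.1.exp_smul_eq c).symm) ?_
  simpa only [Matrix.mul_zero, Matrix.zero_mul, Function.comp_def] using
    (hconj.tendsto 0).comp hdiag

end MatrixExp

section zexp

variable {n : ℕ} (H : Matrix (Fin n) (Fin n) ℝ)

theorem zexp_add (a b : ℤ) : zexp H (a + b) = zexp H a * zexp H b := by
  rw [zexp, Int.cast_add, add_smul,
    Matrix.exp_add_of_commute _ _ (((Commute.refl H).smul_left _).smul_right _)]
  rfl

theorem zexp_zero : zexp H 0 = 1 := by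
  simp [zexp]

theorem zexp_neg_one : zexp H (-1) = NormedSpace.exp (-H) := by
  simp [zexp]

variable {H}

theorem Matrix.IsSymm.transpose_zexp (hH : H.IsSymm) (a : ℤ) : (zexp H a)ᵀ = zexp H a := by
  rw [zexp, ← Matrix.exp_transpose, transpose_smul, hH.eq]

theorem Matrix.PosDef.tendsto_zexp_atBot (hH : H.PosDef) : Tendsto (zexp H) atBot (𝓝 0) :=
  hH.tendsto_exp_smul_atBot.comp (tendsto_intCast_atBot_iff.mpr tendsto_id)

end zexp

theorem MeasureTheory.MemLp.mulVec {m p : Type*} [Fintype m] [Fintype p] [MeasurableSpace Ω]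
    {μ : Measure Ω} {q : ENNReal} {U : Ω → p → ℝ} (P : Matrix m p ℝ) (hU : MemLp U q μ) :
    MemLp (fun ω => P *ᵥ U ω) q μ :=
  (LinearMap.toContinuousLinearMap (Matrix.mulVecLin P)).comp_memLp' hU

section CrossMoment

variable [MeasurableSpace Ω] {μ : Measure Ω} {m p : Type*}

noncomputable def crossMoment (μ : Measure Ω) (U : Ω → m → ℝ) (V : Ω → p → ℝ) : Matrix m p ℝ :=
  Matrix.of fun i j => ∫ ω, U ω i * V ω j ∂μ

variable {U U' : Ω → m → ℝ} {V V' : Ω → p → ℝ}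

theorem transpose_crossMoment : (crossMoment μ U V)ᵀ = crossMoment μ V U := by
  ext i j
  simp only [crossMoment, transpose_apply, of_apply, mul_comm]

variable [Fintype m] [Fintype p]

theorem integrable_apply_mul_apply (hU : MemLp U 2 μ) (hV : MemLp V 2 μ) (i : m) (j : p) :
    Integrable (fun ω => U ω i * V ω j) μ :=
  (hU.eval i).integrable_mul (hV.eval j)

theorem crossMoment_sub_left (hU : MemLp U 2 μ) (hU' : MemLp U' 2 μ) (hV : MemLp V 2 μ) :
    crossMoment μ (fun ω => U ω - U' ω) V = crossMoment μ U V - crossMoment μ U' V := by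
  ext i j
  simp only [crossMoment, of_apply, Matrix.sub_apply, Pi.sub_apply, sub_mul]
  exact integral_sub (integrable_apply_mul_apply hU hV i j) (integrable_apply_mul_apply hU' hV i j)

theorem crossMoment_sub_right (hU : MemLp U 2 μ) (hV : MemLp V 2 μ) (hV' : MemLp V' 2 μ) :
    crossMoment μ U (fun ω => V ω - V' ω) = crossMoment μ U V - crossMoment μ U V' := by
  rw [← transpose_crossMoment, crossMoment_sub_left hV hV' hU, transpose_sub,
    transpose_crossMoment, transpose_crossMoment]

theorem crossMoment_sum_sum {ι κ : Type*} (s : Finset ι) (t : Finset κ) {U : ι → Ω → m → ℝ}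
    {V : κ → Ω → p → ℝ} (hU : ∀ k ∈ s, MemLp (U k) 2 μ) (hV : ∀ j ∈ t, MemLp (V j) 2 μ) :
    crossMoment μ (fun ω => ∑ k ∈ s, U k ω) (fun ω => ∑ j ∈ t, V j ω) =
      ∑ k ∈ s, ∑ j ∈ t, crossMoment μ (U k) (V j) := by
  ext a b
  have hint : ∀ k ∈ s, ∀ j ∈ t, Integrable (fun ω => U k ω a * V j ω b) μ :=
    fun k hk j hj => integrable_apply_mul_apply (hU k hk) (hV j hj) a b
  simp only [crossMoment, of_apply, Matrix.sum_apply, Finset.sum_apply, Finset.sum_mul_sum]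
  rw [integral_finsetSum _ fun k hk => integrable_finsetSum _ (hint k hk)]
  exact sum_congr rfl fun k hk => integral_finsetSum _ (hint k hk)

theorem crossMoment_mulVec_left {m' : Type*} [Fintype m'] (P : Matrix m' m ℝ)
    (hU : MemLp U 2 μ) (hV : MemLp V 2 μ) :
    crossMoment μ (fun ω => P *ᵥ U ω) V = P * crossMoment μ U V := by
  ext i j
  simp only [crossMoment, of_apply, mul_apply, mulVec, dotProduct, Finset.sum_mul, mul_assoc]
  rw [integral_finsetSum _ fun a _ => (integrable_apply_mul_apply hU hV a j).const_mul _]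
  simp only [integral_const_mul]

theorem crossMoment_mulVec_right {p' : Type*} [Fintype p'] (Q : Matrix p' p ℝ)
    (hU : MemLp U 2 μ) (hV : MemLp V 2 μ) :
    crossMoment μ U (fun ω => Q *ᵥ V ω) = crossMoment μ U V * Qᵀ := by
  rw [← transpose_crossMoment, crossMoment_mulVec_left Q hV hU, transpose_mul,
    transpose_crossMoment]

theorem abs_crossMoment_apply_le (hU : MemLp U 2 μ) (hV : MemLp V 2 μ)
    (i : m) (j : p) :
    |crossMoment μ U V i j| ≤ (crossMoment μ U U i i + crossMoment μ V V j j) / 2 := by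
  have hUU := integrable_apply_mul_apply hU hU i i
  have hVV := integrable_apply_mul_apply hV hV j j
  simp only [crossMoment, of_apply]
  calc |∫ ω, U ω i * V ω j ∂μ| ≤ ∫ ω, |U ω i * V ω j| ∂μ := abs_integral_le_integral_abs
    _ ≤ ∫ ω, (U ω i * U ω i + V ω j * V ω j) / 2 ∂μ := by
      refine integral_mono (integrable_apply_mul_apply hU hV i j).abs
        ((hUU.add hVV).div_const 2) fun ω => ?_
      rw [abs_mul]
      nlinarith [sq_nonneg (|U ω i| - |V ω j|), abs_mul_abs_self (U ω i), abs_mul_abs_self (V ω j)]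
    _ = _ := by rw [integral_div, integral_add hUU hVV]

end CrossMoment

namespace IsStationaryProcess

variable [MeasurableSpace Ω] {μ : Measure Ω} {n : ℕ} {X : ℤ → Ω → Fin n → ℝ}

theorem crossMoment_shift (hX : IsStationaryProcess μ X) (hmX : ∀ t, Measurable (X t))
    (a b s : ℤ) : crossMoment μ (X (a + s)) (X (b + s)) = crossMoment μ (X a) (X b) := by
  ext i j
  let f : (Fin 2 → Fin n → ℝ) → ℝ := fun v => v 0 i * v 1 j
  have hf : Measurable f := by fun_prop
  have hmeas : ∀ τ : Fin 2 → ℤ, Measurable fun ω k => X (τ k) ω :=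
    fun τ => measurable_pi_lambda _ fun k => hmX (τ k)
  calc crossMoment μ (X (a + s)) (X (b + s)) i j
      = ∫ v, f v ∂μ.map (fun ω (k : Fin 2) => X (![a, b] k + s) ω) :=
        (integral_map (hmeas fun k => ![a, b] k + s).aemeasurable hf.aestronglyMeasurable).symm
    _ = ∫ v, f v ∂μ.map (fun ω (k : Fin 2) => X (![a, b] k) ω) := by rw [hX s 2 ![a, b]]
    _ = crossMoment μ (X a) (X b) i j := by
        rw [integral_map (hmeas ![a, b]).aemeasurable hf.aestronglyMeasurable]
        simp [f, crossMoment]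

theorem crossMoment_eq_sub (hX : IsStationaryProcess μ X) (hmX : ∀ t, Measurable (X t)) (a b : ℤ) :
    crossMoment μ (X a) (X b) = crossMoment μ (X (a - b)) (X 0) := by
  simpa using hX.crossMoment_shift hmX (a - b) 0 b

theorem crossMoment_mulVec_sub_mulVec (hX : IsStationaryProcess μ X)
    (hmX : ∀ t, Measurable (X t)) (hL2 : ∀ t, MemLp (X t) 2 μ)
    (P P' Q Q' : Matrix (Fin n) (Fin n) ℝ) (a a' b b' : ℤ) :
    crossMoment μ (fun ω => P *ᵥ X a ω - P' *ᵥ X a' ω) (fun ω => Q *ᵥ X b ω - Q' *ᵥ X b' ω) =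
      P * crossMoment μ (X (a - b)) (X 0) * Qᵀ - P * crossMoment μ (X (a - b')) (X 0) * Q'ᵀ -
        P' * crossMoment μ (X (a' - b)) (X 0) * Qᵀ +
          P' * crossMoment μ (X (a' - b')) (X 0) * Q'ᵀ := by
  have hV : MemLp (fun ω => Q *ᵥ X b ω - Q' *ᵥ X b' ω) 2 μ :=
    ((hL2 b).mulVec Q).sub ((hL2 b').mulVec Q')
  rw [crossMoment_sub_left ((hL2 a).mulVec P) ((hL2 a').mulVec P') hV,
    crossMoment_sub_right ((hL2 a).mulVec P) ((hL2 b).mulVec Q) ((hL2 b').mulVec Q'),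
    crossMoment_sub_right ((hL2 a').mulVec P') ((hL2 b).mulVec Q) ((hL2 b').mulVec Q')]
  simp only [crossMoment_mulVec_left _ (hL2 _) ((hL2 _).mulVec _),
    crossMoment_mulVec_right _ (hL2 _) (hL2 _), ← hX.crossMoment_eq_sub hmX, Matrix.mul_assoc]
  abel

theorem abs_crossMoment_apply_le (hX : IsStationaryProcess μ X)
    (hmX : ∀ t, Measurable (X t)) (hL2 : ∀ t, MemLp (X t) 2 μ) (s : ℤ) (i j : Fin n) :
    |crossMoment μ (X s) (X 0) i j| ≤
      (crossMoment μ (X 0) (X 0) i i + crossMoment μ (X 0) (X 0) j j) / 2 := by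
  simpa [hX.crossMoment_eq_sub hmX s s] using _root_.abs_crossMoment_apply_le (hL2 s) (hL2 0) i j

end IsStationaryProcess

section Recursion

variable {n : ℕ} {H : Matrix (Fin n) (Fin n) ℝ} {X G : ℤ → Ω → Fin n → ℝ}

theorem zexp_mulVec_increment
    (heq : ∀ t ω, X t ω - NormedSpace.exp (-H) *ᵥ X (t - 1) ω = G t ω - G (t - 1) ω)
    (k : ℤ) (ω : Ω) :
    zexp H k *ᵥ (G k ω - G (k - 1) ω) = zexp H k *ᵥ X k ω - zexp H (k - 1) *ᵥ X (k - 1) ω := by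
  rw [← heq, mulVec_sub, mulVec_mulVec, ← zexp_neg_one, ← zexp_add, ← sub_eq_add_neg]

theorem sum_Icc_zexp_mulVec_increment
    (heq : ∀ t ω, X t ω - NormedSpace.exp (-H) *ᵥ X (t - 1) ω = G t ω - G (t - 1) ω)
    {l u : ℤ} (h : l - 1 ≤ u) (ω : Ω) :
    ∑ k ∈ Icc l u, zexp H k *ᵥ (G k ω - G (k - 1) ω) =
      zexp H u *ᵥ X u ω - zexp H (l - 1) *ᵥ X (l - 1) ω := by
  simp only [zexp_mulVec_increment heq]
  exact sum_Icc_sub_int (fun k => zexp H k *ᵥ X k ω) h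

variable [MeasurableSpace Ω] {μ : Measure Ω}

theorem memLp_increment
    (heq : ∀ t ω, X t ω - NormedSpace.exp (-H) *ᵥ X (t - 1) ω = G t ω - G (t - 1) ω)
    (hL2 : ∀ t, MemLp (X t) 2 μ) (k : ℤ) :
    MemLp (fun ω => G k ω - G (k - 1) ω) 2 μ := by
  have h : MemLp (fun ω => X k ω - NormedSpace.exp (-H) *ᵥ X (k - 1) ω) 2 μ :=
    (hL2 k).sub ((hL2 (k - 1)).mulVec _)
  simpa only [heq] using h

theorem crossMoment_increment_eq
    (heq : ∀ t ω, X t ω - NormedSpace.exp (-H) *ᵥ X (t - 1) ω = G t ω - G (t - 1) ω)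
    (hX : IsStationaryProcess μ X) (hmX : ∀ t, Measurable (X t)) (hL2 : ∀ t, MemLp (X t) 2 μ)
    (k j : ℤ) :
    crossMoment μ (fun ω => G k ω - G (k - 1) ω) (fun ω => G j ω - G (j - 1) ω) =
      crossMoment μ (fun ω => G (k - j) ω - G (k - j - 1) ω) (fun ω => G 0 ω - G (-1) ω) := by
  have hΔ : ∀ t, (fun ω => G t ω - G (t - 1) ω) =
      fun ω => 1 *ᵥ X t ω - NormedSpace.exp (-H) *ᵥ X (t - 1) ω := by
    intro t
    simp only [one_mulVec, heq]
  have hΔ0 := hΔ 0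
  rw [zero_sub] at hΔ0
  rw [hΔ, hΔ, hΔ, hΔ0, hX.crossMoment_mulVec_sub_mulVec hmX hL2,
    hX.crossMoment_mulVec_sub_mulVec hmX hL2]
  ring_nf

theorem sum_Icc_sum_Icc_zexp_mul_crossMoment_increment (hH : H.IsSymm)
    (heq : ∀ t ω, X t ω - NormedSpace.exp (-H) *ᵥ X (t - 1) ω = G t ω - G (t - 1) ω)
    (hX : IsStationaryProcess μ X) (hmX : ∀ t, Measurable (X t)) (hL2 : ∀ t, MemLp (X t) 2 μ)
    {l u v : ℤ} (hu : l - 1 ≤ u) (hv : l - 1 ≤ v) :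
    ∑ k ∈ Icc l u, ∑ j ∈ Icc l v, zexp H k *
        crossMoment μ (fun ω => G (k - j) ω - G (k - j - 1) ω) (fun ω => G 0 ω - G (-1) ω) *
          zexp H j =
      crossMoment μ (fun ω => zexp H u *ᵥ X u ω - zexp H (l - 1) *ᵥ X (l - 1) ω)
        (fun ω => zexp H v *ᵥ X v ω - zexp H (l - 1) *ᵥ X (l - 1) ω) := by
  have hΔ := memLp_increment heq hL2
  have hterm : ∀ k j, zexp H k *
      crossMoment μ (fun ω => G (k - j) ω - G (k - j - 1) ω) (fun ω => G 0 ω - G (-1) ω) *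
        zexp H j = crossMoment μ (fun ω => zexp H k *ᵥ (G k ω - G (k - 1) ω))
          (fun ω => zexp H j *ᵥ (G j ω - G (j - 1) ω)) := by
    intro k j
    rw [← crossMoment_increment_eq heq hX hmX hL2, crossMoment_mulVec_left _ (hΔ k)
      ((hΔ j).mulVec _), crossMoment_mulVec_right _ (hΔ k) (hΔ j), hH.transpose_zexp,
      Matrix.mul_assoc]
  simp only [hterm]
  rw [← crossMoment_sum_sum _ _ (fun k _ => (hΔ k).mulVec _) (fun j _ => (hΔ j).mulVec _)]
  simp only [sum_Icc_zexp_mulVec_increment heq hu, sum_Icc_zexp_mulVec_increment heq hv]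

theorem zexp_neg_mul_sum_Icc_sum_Icc_crossMoment_increment (hH : H.IsSymm)
    (heq : ∀ t ω, X t ω - NormedSpace.exp (-H) *ᵥ X (t - 1) ω = G t ω - G (t - 1) ω)
    (hX : IsStationaryProcess μ X) (hmX : ∀ t, Measurable (X t)) (hL2 : ∀ t, MemLp (X t) 2 μ)
    {t : ℤ} {M : ℕ} (hM : -(M : ℤ) - 1 ≤ t) :
    zexp H (-t) * ∑ k ∈ Icc (-(M : ℤ)) t, ∑ j ∈ Icc (-(M : ℤ)) 0, zexp H k *
        crossMoment μ (fun ω => G (k - j) ω - G (k - j - 1) ω) (fun ω => G 0 ω - G (-1) ω) *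
          zexp H j =
      crossMoment μ (X t) (X 0) -
        crossMoment μ (X (t - (-M - 1))) (X 0) * zexp H (-M - 1) -
          zexp H (-t) * zexp H (-M - 1) * crossMoment μ (X (-M - 1)) (X 0) +
            zexp H (-t) * zexp H (-M - 1) * crossMoment μ (X 0) (X 0) * zexp H (-M - 1) := by
  have hinv : zexp H (-t) * zexp H t = 1 := by
    rw [← zexp_add, neg_add_cancel, zexp_zero]
  rw [sum_Icc_sum_Icc_zexp_mul_crossMoment_increment hH heq hX hmX hL2 hM (by omega),
    hX.crossMoment_mulVec_sub_mulVec hmX hL2]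
  simp only [zexp_zero, transpose_one, hH.transpose_zexp, mul_one, mul_sub, mul_add,
    ← Matrix.mul_assoc, hinv, one_mul, sub_zero, sub_self]

end Recursion

theorem stmt7_general {n : ℕ} [MeasurableSpace Ω] (μ : Measure Ω)
    (H : Matrix (Fin n) (Fin n) ℝ) (hH : H.PosDef)
    (X G : ℤ → Ω → (Fin n → ℝ))
    (hmX : ∀ t, Measurable (X t))
    (hX : IsStationaryProcess μ X)
    (hL2X : ∀ (t : ℤ) (i : Fin n), MemLp (fun ω => X t ω i) 2 μ)
    (heq : ∀ (t : ℤ) (ω : Ω),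
      X t ω - (NormedSpace.exp (-H)).mulVec (X (t - 1) ω) = G t ω - G (t - 1) ω)
    (γ r : ℤ → Matrix (Fin n) (Fin n) ℝ)
    (hγ : ∀ t : ℤ, γ t = Matrix.of fun i j => ∫ ω, X t ω i * X 0 ω j ∂μ)
    (hr : ∀ t : ℤ, r t = Matrix.of fun i j =>
      ∫ ω, (G t ω - G (t - 1) ω) i * (G 0 ω - G (-1) ω) j ∂μ) :
    ∀ t : ℤ, Tendsto
      (fun M : ℕ => zexp H (-t) *
        ∑ k ∈ Finset.Icc (-(M : ℤ)) t, ∑ j ∈ Finset.Icc (-(M : ℤ)) 0,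
          zexp H k * r (k - j) * zexp H j)
      Filter.atTop (𝓝 (γ t)) := by
  intro t
  have hL2 : ∀ t, MemLp (X t) 2 μ := fun t => memLp_pi_iff.mpr (hL2X t)
  have hγ' : γ t = crossMoment μ (X t) (X 0) := hγ t
  have hr' : ∀ s, r s = crossMoment μ (fun ω => G s ω - G (s - 1) ω)
      (fun ω => G 0 ω - G (-1) ω) := hr
  have hZ : Tendsto (fun M : ℕ => zexp H (-M - 1)) atTop (𝓝 0) :=
    hH.tendsto_zexp_atBot.comp <| tendsto_atBot_add_const_right _ _ <|
      tendsto_neg_atTop_atBot.comp tendsto_natCast_atTop_atTop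
  have hEZ : Tendsto (fun M : ℕ => zexp H (-t) * zexp H (-M - 1)) atTop (𝓝 0) := by
    simpa using hZ.const_mul (zexp H (-t))
  have hbdd : ∀ (τ : ℕ → ℤ) i j,
      IsBoundedUnder (· ≤ ·) atTop fun M => ‖crossMoment μ (X (τ M)) (X 0) i j‖ :=
    fun τ i j => isBoundedUnder_of ⟨_, fun M => hX.abs_crossMoment_apply_le hmX hL2 _ i j⟩
  simp only [hr', hγ']
  refine Tendsto.congr' (eventually_atTop.mpr ⟨(-t).toNat, fun M hM =>
    (zexp_neg_mul_sum_Icc_sum_Icc_crossMoment_increment (isHermitian_iff_isSymm.mp hH.1) heq hX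
      hmX hL2 (by omega)).symm⟩) ?_
  have h1 := isBoundedUnder_le_matrix_mul_tendsto_zero (hbdd fun M => t - (-M - 1)) hZ
  have h2 := hEZ.matrix_zero_mul_isBoundedUnder_le (hbdd fun M => -M - 1)
  have h3 := (hEZ.matrix_zero_mul_isBoundedUnder_le (hbdd fun _ => 0)).mul hZ
  simpa using ((tendsto_const_nhds (x := crossMoment μ (X t) (X 0))).sub h1 |>.sub h2).add h3

/-- for a centred square-integrable stationary `X` satisfying
`X_t − e^{−H} X_{t−1} = Δ_t G` with square-integrable `G ∈ 𝒢_H`, the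
autocovariance `γ(t) = E[X_t X_0ᵀ]` is given by
`γ(t) = e^{−tH} Σ_{k=−∞}^t Σ_{j=−∞}^0 e^{kH} r(k−j) e^{jH}`, where
`r(t) = E[(Δ_t G)(Δ_0 G)ᵀ]` and the double series converges as the limit of the
partial sums over `k ∈ [−M, t]`, `j ∈ [−M, 0]` as `M → ∞`. -/
theorem stmt7 {n : ℕ} [MeasurableSpace Ω] (μ : Measure Ω) [IsProbabilityMeasure μ]
    (H : Matrix (Fin n) (Fin n) ℝ) (hH : H.PosDef)
    (X G : ℤ → Ω → (Fin n → ℝ))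
    (hmX : ∀ t, Measurable (X t)) (hmG : ∀ t, Measurable (G t))
    (hX : IsStationaryProcess μ X)
    (hcent : ∀ (t : ℤ) (i : Fin n), ∫ ω, X t ω i ∂μ = 0)
    (hL2X : ∀ (t : ℤ) (i : Fin n), MemLp (fun ω => X t ω i) 2 μ)
    (hL2G : ∀ (t : ℤ) (i : Fin n), MemLp (fun ω => G t ω i) 2 μ)
    (hG : MemG μ H G)
    (heq : ∀ (t : ℤ) (ω : Ω),
      X t ω - (NormedSpace.exp (-H)).mulVec (X (t - 1) ω) = G t ω - G (t - 1) ω)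
    (γ r : ℤ → Matrix (Fin n) (Fin n) ℝ)
    (hγ : ∀ t : ℤ, γ t = Matrix.of fun i j => ∫ ω, X t ω i * X 0 ω j ∂μ)
    (hr : ∀ t : ℤ, r t = Matrix.of fun i j =>
      ∫ ω, (G t ω - G (t - 1) ω) i * (G 0 ω - G (-1) ω) j ∂μ) :
    ∀ t : ℤ, Tendsto
      (fun M : ℕ => zexp H (-t) *
        ∑ k ∈ Finset.Icc (-(M : ℤ)) t, ∑ j ∈ Finset.Icc (-(M : ℤ)) 0,
          zexp H k * r (k - j) * zexp H j)
      Filter.atTop (𝓝 (γ t)) :=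
  stmt7_general μ H hH X G hmX hX hL2X heq γ r hγ hr
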